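/- Let $\psi : Q \to M$ and $\widetilde{\psi} : \widetilde{Q} \to \widetilde{M}$ be submersions between complex manifolds, $y \in Q$, $\widetilde{y} \in \widetilde{Q}$, $x = \psi(y)$, $\widetilde{x} = \widetilde{\psi}(\widetilde{y})$. Let $\xi : (y/Q)_\infty \to (\widetilde{y}/\widetilde{Q})_\infty$ and $\varphi : (x/M)_\infty \to (\widetilde{x}/\widetilde{M})_\infty$ be formal isomorphisms of formal neighborhoods satisfying $\widetilde{\psi}\circ\xi = \varphi\circ\psi$. If $\xi$ is convergent (i.e., is the restriction of a biholomorphism of Euclidean neighborhoods), then $\varphi$ is convergent. -/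

import Mathlib

/-- Let `ψ : Q → M` and `ψ̃ : Q̃ → M̃` be (germs at the base points, normalized to the
origin, of) holomorphic submersions between complex manifolds, represented by convergent
formal power series `pψ`, `pψ'` with surjective linear terms.  Let
`ξ : (y/Q)_∞ → (ỹ/Q̃)_∞` and `φ : (x/M)_∞ → (x̃/M̃)_∞` be formal isomorphisms
(formal power series fixing the origin with bijective linear terms) satisfying
`ψ̃ ∘ ξ = φ ∘ ψ` as formal maps.  If `ξ` is convergent (realized by a holomorphic map),
then `φ` is convergent. -/
theorem stmt14
    {Q M Q' M' : Type*}
    [NormedAddCommGroup Q] [NormedSpace ℂ Q] [FiniteDimensional ℂ Q]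
    [NormedAddCommGroup M] [NormedSpace ℂ M] [FiniteDimensional ℂ M]
    [NormedAddCommGroup Q'] [NormedSpace ℂ Q'] [FiniteDimensional ℂ Q']
    [NormedAddCommGroup M'] [NormedSpace ℂ M'] [FiniteDimensional ℂ M']
    (pψ : FormalMultilinearSeries ℂ Q M) (pψ' : FormalMultilinearSeries ℂ Q' M')
    (ξ : FormalMultilinearSeries ℂ Q Q') (φ : FormalMultilinearSeries ℂ M M')
    -- all formal maps send the base point to the base point
    (hψ0 : pψ 0 = 0) (hψ'0 : pψ' 0 = 0) (hξ0 : ξ 0 = 0) (hφ0 : φ 0 = 0)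
    -- `ψ` and `ψ̃` are genuine holomorphic maps
    (hψconv : ∃ f : Q → M, HasFPowerSeriesAt f pψ 0)
    (hψ'conv : ∃ f : Q' → M', HasFPowerSeriesAt f pψ' 0)
    -- `ψ` and `ψ̃` are submersions at the base points
    (hψsub : Function.Surjective fun v : Q => pψ 1 fun _ => v)
    (hψ'sub : Function.Surjective fun v : Q' => pψ' 1 fun _ => v)
    -- `ξ` and `φ` are formal isomorphisms
    (hξiso : Function.Bijective fun v : Q => ξ 1 fun _ => v)
    (hφiso : Function.Bijective fun v : M => φ 1 fun _ => v)
    -- `ψ̃ ∘ ξ = φ ∘ ψ`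
    (hcomm : pψ'.comp ξ = φ.comp pψ)
    -- `ξ` is convergent
    (hξconv : ∃ g : Q → Q', HasFPowerSeriesAt g ξ 0) :
    -- then `φ` is convergent
    ∃ h : M → M', HasFPowerSeriesAt h φ 0 := by
  classical
  obtain ⟨f, hf⟩ := hψconv
  obtain ⟨f', hf'⟩ := hψ'conv
  obtain ⟨g, hg⟩ := hξconv
  -- a continuous linear right inverse of the linear term of `pψ`
  set Lc : Q →L[ℂ] M := (continuousMultilinearCurryFin1 ℂ Q M) (pψ 1) with hLc
  have hLsurj : Function.Surjective Lc := hψsub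
  obtain ⟨σ, hσ⟩ := (Lc : Q →ₗ[ℂ] M).exists_rightInverse_of_surjective
    (LinearMap.range_eq_top.2 hLsurj)
  set σc : M →L[ℂ] Q := LinearMap.toContinuousLinearMap σ with hσc
  have hσ' : ∀ v : M, Lc (σc v) = v := fun v => by
    have := LinearMap.congr_fun hσ v
    exact (by simpa using this : Lc (σ v) = v)
  have hσc0 : σc 0 = 0 := map_zero σc
  -- the power series of `σc` at `0`
  set s : FormalMultilinearSeries ℂ M Q := σc.fpowerSeries 0 with hs
  have hsσ : HasFPowerSeriesAt σc s 0 := σc.hasFPowerSeriesAt 0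
  -- `q = ψ ∘ σ`, a series from `M` to `M` with identity linear term
  set q : FormalMultilinearSeries ℂ M M := pψ.comp s with hq
  have hqconv : HasFPowerSeriesAt (f ∘ σc) q 0 := by
    have hf0 : HasFPowerSeriesAt f pψ (σc 0) := by rw [hσc0]; exact hf
    exact hf0.comp hsσ
  have hq1 : q 1 = (continuousMultilinearCurryFin1 ℂ M M).symm
      (ContinuousLinearEquiv.refl ℂ M : M →L[ℂ] M) := by
    ext v
    rw [hq, FormalMultilinearSeries.comp_coeff_one]
    have hs1 : s 1 v = σc (v 0) := by
      simp [hs, ContinuousLinearMap.fpowerSeries]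
    rw [hs1]
    have : pψ 1 (fun _ => σc (v 0)) = Lc (σc (v 0)) := by
      rw [hLc]
      simp only [continuousMultilinearCurryFin1_apply]
      exact congrArg _ (funext fun i => by fin_cases i; simp [Fin.snoc])
    rw [this, hσ' (v 0)]
    simp
  -- formal right inverse of `q`
  set r : FormalMultilinearSeries ℂ M M :=
    q.rightInv (ContinuousLinearEquiv.refl ℂ M) 0 with hr
  have hq00 : q 0 0 = 0 := by
    have : q 0 (0 : Fin 0 → M) = pψ 0 fun _ => (0 : Q) :=
      FormalMultilinearSeries.comp_coeff_zero _ _ _ _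
    rw [this, hψ0]; rfl
  have hqr : q.comp r = FormalMultilinearSeries.id ℂ M 0 := by
    rw [hr, FormalMultilinearSeries.comp_rightInv q _ _ hq1, hq00]
  -- positive radius of `r`, hence a holomorphic realization
  have hrrad : 0 < r.radius :=
    FormalMultilinearSeries.radius_rightInv_pos_of_radius_pos hqconv.radius_pos
  have hrsum : HasFPowerSeriesAt r.sum r 0 :=
    (r.hasFPowerSeriesOnBall hrrad).hasFPowerSeriesAt
  have hrsum0 : r.sum 0 = 0 := by
    have h0 : r 0 (fun _ => (0 : M)) = r.sum 0 := hrsum.coeff_zero _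
    rw [← h0, hr, FormalMultilinearSeries.rightInv_coeff_zero]
    rfl
  -- key formal identity: `φ = (ψ' ∘ (ξ ∘ σ)) ∘ r`
  have hkey : (pψ'.comp (ξ.comp s)).comp r = φ := by
    calc (pψ'.comp (ξ.comp s)).comp r
        = ((pψ'.comp ξ).comp s).comp r := by
          rw [FormalMultilinearSeries.comp_assoc pψ' ξ s]
      _ = ((φ.comp pψ).comp s).comp r := by rw [hcomm]
      _ = (φ.comp q).comp r := by
          rw [hq, FormalMultilinearSeries.comp_assoc φ pψ s]
      _ = φ.comp (q.comp r) := by rw [FormalMultilinearSeries.comp_assoc]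
      _ = φ := by rw [hqr, FormalMultilinearSeries.comp_id]
  -- convergence of `ψ' ∘ (ξ ∘ σ)`
  have hg0 : g 0 = 0 := by
    have := (hg.coeff_zero (fun _ => 0)).symm
    rw [hξ0] at this
    simpa using this
  have hgσ : HasFPowerSeriesAt (g ∘ σc) (ξ.comp s) 0 := by
    have hg' : HasFPowerSeriesAt g ξ (σc 0) := by rw [hσc0]; exact hg
    exact hg'.comp hsσ
  have hF : HasFPowerSeriesAt (f' ∘ (g ∘ σc)) (pψ'.comp (ξ.comp s)) 0 := by
    have hf'' : HasFPowerSeriesAt f' pψ' ((g ∘ σc) 0) := by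
      show HasFPowerSeriesAt f' pψ' (g (σc 0))
      rw [hσc0, hg0]; exact hf'
    exact hf''.comp hgσ
  -- conclude
  refine ⟨(f' ∘ (g ∘ σc)) ∘ r.sum, ?_⟩
  have hF' : HasFPowerSeriesAt (f' ∘ (g ∘ σc)) (pψ'.comp (ξ.comp s)) (r.sum 0) := by
    rw [hrsum0]; exact hF
  have := hF'.comp hrsum
  rwa [hkey] at this
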